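/- arXiv:1210.7949 — 5 statements merged into one kernel-verified Lean document; each statement's English description precedes it below -/
import Mathlib

section
/- On an almost symplectic manifold (M,ω), the bracket {f,h} = ω(X_f,X_h) on the algebra of Hamiltonian functions satisfies the Jacobi identity, hence makes the set of Hamiltonian functions into a Poisson algebra. -/
/-!
Write `ω(X,Y) = i(Y) i(X) ω` and `D(X,Y,Z) = i(Z) i(Y) i(X) dω`. For a Hamiltonian field `X_x`,
`ω(X_x, Y) = -Y x` and `ω(Y, X_x) = Y x`, so the intrinsic formula expresses `D` on three
Hamiltonian fields through second derivatives of the functions alone: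
`D(X_x, X_y, X_z) = X_x X_z y - X_y X_z x + X_z X_y x`.
Since `i(X) dω = 0` for Hamiltonian `X`, the value `D(X, Y, Z)` does not depend on the Hamiltonian
field `X` (it need not vanish, as `i(Y)` and `i(Z)` are not assumed to preserve `0`); comparing the three resulting identities for `(Y, Z) = (X_f, X_f), (X_f, X_h), (X_f, X_k)`
gives exactly the cyclic sum `[X_h, X_k] f + [X_k, X_f] h + [X_f, X_h] k = 0`.
-/

section Hamiltonian

variable {V Ω0 Ω1 Ω2 : Type*} [AddCommGroup Ω0] [AddCommGroup Ω1]
  {act : V → Ω0 → Ω0} {d0 : Ω0 → Ω1} {i1 : V → Ω1 → Ω0} {i2 : V → Ω2 → Ω1} {ω : Ω2}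

theorem omega_apply_of_hamiltonian_left
    (hi1Neg : ∀ (X : V) (α : Ω1), i1 X (-α) = - i1 X α)
    (hdf : ∀ (X : V) (g : Ω0), i1 X (d0 g) = act X g)
    {X : V} {x : Ω0} (hX : i2 X ω = - d0 x) (Y : V) :
    i1 Y (i2 X ω) = - act Y x := by
  rw [hX, hi1Neg, hdf]

theorem omega_apply_of_hamiltonian_right
    (hSkew : ∀ X Y : V, i1 X (i2 Y ω) = - i1 Y (i2 X ω))
    (hi1Neg : ∀ (X : V) (α : Ω1), i1 X (-α) = - i1 X α)
    (hdf : ∀ (X : V) (g : Ω0), i1 X (d0 g) = act X g)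
    {Y : V} {y : Ω0} (hY : i2 Y ω = - d0 y) (X : V) :
    i1 Y (i2 X ω) = act X y := by
  rw [hSkew, omega_apply_of_hamiltonian_left hi1Neg hdf hY, neg_neg]

theorem dω_apply_of_hamiltonian {Ω3 : Type*} {bracket : V → V → V} {d2 : Ω2 → Ω3}
    {i3 : V → Ω3 → Ω2}
    (hSkew : ∀ X Y : V, i1 X (i2 Y ω) = - i1 Y (i2 X ω))
    (hi1Neg : ∀ (X : V) (α : Ω1), i1 X (-α) = - i1 X α)
    (hdf : ∀ (X : V) (g : Ω0), i1 X (d0 g) = act X g)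
    (hbr : ∀ (X Y : V) (g : Ω0), act (bracket X Y) g = act X (act Y g) - act Y (act X g))
    (hdω : ∀ X Y Z : V,
      i1 Z (i2 Y (i3 X (d2 ω))) =
        act X (i1 Z (i2 Y ω)) - act Y (i1 Z (i2 X ω)) + act Z (i1 Y (i2 X ω))
        - i1 Z (i2 (bracket X Y) ω) + i1 Y (i2 (bracket X Z) ω)
        - i1 X (i2 (bracket Y Z) ω))
    {X Y Z : V} {x y z : Ω0}
    (hX : i2 X ω = - d0 x) (hY : i2 Y ω = - d0 y) (hZ : i2 Z ω = - d0 z) :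
    i1 Z (i2 Y (i3 X (d2 ω))) = act X (act Z y) - act Y (act Z x) + act Z (act Y x) := by
  simp only [hdω, omega_apply_of_hamiltonian_right hSkew hi1Neg hdf hX,
    omega_apply_of_hamiltonian_right hSkew hi1Neg hdf hY,
    omega_apply_of_hamiltonian_right hSkew hi1Neg hdf hZ, hbr]
  abel

end Hamiltonian

theorem poisson_bracket_jacobi_identity_general
    {V Ω0 Ω1 Ω2 Ω3 : Type*}
    [AddCommGroup Ω0] [AddCommGroup Ω1] [AddCommGroup Ω2] [AddCommGroup Ω3]
    (bracket : V → V → V)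
    (act : V → Ω0 → Ω0)
    (d0 : Ω0 → Ω1) (d2 : Ω2 → Ω3)
    (i1 : V → Ω1 → Ω0) (i2 : V → Ω2 → Ω1) (i3 : V → Ω3 → Ω2)
    (ω : Ω2)
    -- notation: w X Y = ω(X,Y) = i(Y) i(X) ω
    -- skew-symmetry of ω
    (hSkew : ∀ X Y : V, i1 X (i2 Y ω) = - i1 Y (i2 X ω))
    -- interior products are additive
    (hi1Neg : ∀ (X : V) (α : Ω1), i1 X (-α) = - i1 X α)
    -- (dg)(X) = X g
    (hdf : ∀ (X : V) (g : Ω0), i1 X (d0 g) = act X g)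
    -- [X,Y] g = X (Y g) - Y (X g)
    (hbr : ∀ (X Y : V) (g : Ω0), act (bracket X Y) g = act X (act Y g) - act Y (act X g))
    -- intrinsic formula for dω on vector fields:
    -- dω(X,Y,Z) = Xω(Y,Z) - Yω(X,Z) + Zω(X,Y) - ω([X,Y],Z) + ω([X,Z],Y) - ω([Y,Z],X)
    (hdω : ∀ X Y Z : V,
      i1 Z (i2 Y (i3 X (d2 ω))) =
        act X (i1 Z (i2 Y ω)) - act Y (i1 Z (i2 X ω)) + act Z (i1 Y (i2 X ω))
        - i1 Z (i2 (bracket X Y) ω) + i1 Y (i2 (bracket X Z) ω)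
        - i1 X (i2 (bracket Y Z) ω))
    (f h k : Ω0) (Xf Xh Xk : V)
    -- X_f, X_h, X_k are Hamiltonian vector fields of f, h, k
    (hXf1 : i2 Xf ω = - d0 f) (hXf2 : i3 Xf (d2 ω) = 0)
    (hXh1 : i2 Xh ω = - d0 h) (hXh2 : i3 Xh (d2 ω) = 0)
    (hXk1 : i2 Xk ω = - d0 k) (hXk2 : i3 Xk (d2 ω) = 0) :
    -- Jacobi identity: {f,{h,k}} + {h,{k,f}} + {k,{f,h}} = 0, with X_{{h,k}} = [X_h,X_k]
    i1 (bracket Xh Xk) (i2 Xf ω) + i1 (bracket Xk Xf) (i2 Xh ω)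
      + i1 (bracket Xf Xh) (i2 Xk ω) = 0 := by
  have hD {X Y Z : V} {x y z : Ω0} :=
    dω_apply_of_hamiltonian (X := X) (Y := Y) (Z := Z) (x := x) (y := y) (z := z)
      hSkew hi1Neg hdf hbr hdω
  have hFF : i1 Xf (i2 Xf (i3 Xh (d2 ω))) = i1 Xf (i2 Xf (i3 Xk (d2 ω))) := by
    rw [hXh2, hXk2]
  have hFH : i1 Xh (i2 Xf (i3 Xk (d2 ω))) = i1 Xh (i2 Xf (i3 Xf (d2 ω))) := by
    rw [hXk2, hXf2]
  have hFK : i1 Xk (i2 Xf (i3 Xh (d2 ω))) = i1 Xk (i2 Xf (i3 Xf (d2 ω))) := by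
    rw [hXh2, hXf2]
  rw [hD hXh1 hXf1 hXf1, hD hXk1 hXf1 hXf1] at hFF
  rw [hD hXk1 hXf1 hXh1, hD hXf1 hXf1 hXh1] at hFH
  rw [hD hXh1 hXf1 hXk1, hD hXf1 hXf1 hXk1] at hFK
  simp only [omega_apply_of_hamiltonian_left hi1Neg hdf hXf1,
    omega_apply_of_hamiltonian_left hi1Neg hdf hXh1,
    omega_apply_of_hamiltonian_left hi1Neg hdf hXk1, hbr]
  linear_combination (norm := abel) hFF + hFH - hFK

theorem poisson_bracket_jacobi_identity
    {V Ω0 Ω1 Ω2 Ω3 : Type*}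
    [AddCommGroup Ω0] [AddCommGroup Ω1] [AddCommGroup Ω2] [AddCommGroup Ω3]
    (bracket : V → V → V)
    (act : V → Ω0 → Ω0)
    (d0 : Ω0 → Ω1) (d1 : Ω1 → Ω2) (d2 : Ω2 → Ω3)
    (i1 : V → Ω1 → Ω0) (i2 : V → Ω2 → Ω1) (i3 : V → Ω3 → Ω2)
    (ω : Ω2)
    -- notation: w X Y = ω(X,Y) = i(Y) i(X) ω
    -- skew-symmetry of ω
    (hSkew : ∀ X Y : V, i1 X (i2 Y ω) = - i1 Y (i2 X ω))
    -- interior products are additive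
    (hi1Neg : ∀ (X : V) (α : Ω1), i1 X (-α) = - i1 X α)
    (hi3Zero : ∀ X : V, i3 X (0 : Ω3) = 0)
    -- (dg)(X) = X g
    (hdf : ∀ (X : V) (g : Ω0), i1 X (d0 g) = act X g)
    -- [X,Y] g = X (Y g) - Y (X g)
    (hbr : ∀ (X Y : V) (g : Ω0), act (bracket X Y) g = act X (act Y g) - act Y (act X g))
    -- intrinsic formula for dω on vector fields:
    -- dω(X,Y,Z) = Xω(Y,Z) - Yω(X,Z) + Zω(X,Y) - ω([X,Y],Z) + ω([X,Z],Y) - ω([Y,Z],X)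
    (hdω : ∀ X Y Z : V,
      i1 Z (i2 Y (i3 X (d2 ω))) =
        act X (i1 Z (i2 Y ω)) - act Y (i1 Z (i2 X ω)) + act Z (i1 Y (i2 X ω))
        - i1 Z (i2 (bracket X Y) ω) + i1 Y (i2 (bracket X Z) ω)
        - i1 X (i2 (bracket Y Z) ω))
    (f h k : Ω0) (Xf Xh Xk : V)
    -- X_f, X_h, X_k are Hamiltonian vector fields of f, h, k
    (hXf1 : i2 Xf ω = - d0 f) (hXf2 : i3 Xf (d2 ω) = 0)
    (hXh1 : i2 Xh ω = - d0 h) (hXh2 : i3 Xh (d2 ω) = 0)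
    (hXk1 : i2 Xk ω = - d0 k) (hXk2 : i3 Xk (d2 ω) = 0) :
    -- Jacobi identity: {f,{h,k}} + {h,{k,f}} + {k,{f,h}} = 0, with X_{{h,k}} = [X_h,X_k]
    i1 (bracket Xh Xk) (i2 Xf ω) + i1 (bracket Xk Xf) (i2 Xh ω)
      + i1 (bracket Xf Xh) (i2 Xk ω) = 0 :=
  poisson_bracket_jacobi_identity_general bracket act d0 d2 i1 i2 i3 ω hSkew hi1Neg hdf hbr hdω f h
    k Xf Xh Xk hXf1 hXf2 hXh1 hXh2 hXk1 hXk2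
end

section
/- Let M = {(x¹,x²,x³,x⁴)∈ℝ⁴ : x¹>0, x²>0} with θ = dx¹∧dx² + dx¹∧dx³ + x¹x² dx³∧dx⁴. Then a vector field X on M satisfies i(X)dθ = 0 if and only if X = f·(x¹∂/∂x¹ - x²∂/∂x²) for some smooth function f, and the additional condition d(i(X)θ) = 0 forces f = 0. Hence (M,θ) has no nonzero locally Hamiltonian vector fields. -/
noncomputable section

open scoped BigOperators

/-- Partial derivative of `g` at `z` in the `i`-th coordinate direction. -/
def pder {ι : Type*} [Fintype ι] [DecidableEq ι] (i : ι)
    (g : (ι → ℝ) → ℝ) (z : ι → ℝ) : ℝ :=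
  fderiv ℝ g z (Pi.single i 1)

/-- Components of the exterior differential of a 1-form with components `α`. -/
def dOne {ι : Type*} [Fintype ι] [DecidableEq ι]
    (α : (ι → ℝ) → ι → ℝ) (z : ι → ℝ) (i j : ι) : ℝ :=
  pder i (fun w => α w j) z - pder j (fun w => α w i) z

/-- Components of the exterior differential of a 2-form with (skew-symmetric)
components `ω`: `(dω)_{ijk} = ∂_i ω_{jk} - ∂_j ω_{ik} + ∂_k ω_{ij}`. -/
def dTwo {ι : Type*} [Fintype ι] [DecidableEq ι]
    (ω : (ι → ℝ) → ι → ι → ℝ) (z : ι → ℝ) (i j k : ι) : ℝ :=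
  pder i (fun w => ω w j k) z - pder j (fun w => ω w i k) z + pder k (fun w => ω w i j) z

/-- Components of the interior product `i(X)ω` of a vector field with a 2-form. -/
def intTwo {ι : Type*} [Fintype ι]
    (X : (ι → ℝ) → ι → ℝ) (ω : (ι → ℝ) → ι → ι → ℝ) (z : ι → ℝ) (j : ι) : ℝ :=
  ∑ i, X z i * ω z i j

/-- Components of the interior product `i(X)Θ` of a vector field with a 3-form. -/
def intThree {ι : Type*} [Fintype ι]
    (X : (ι → ℝ) → ι → ℝ) (Θ : (ι → ℝ) → ι → ι → ι → ℝ) (z : ι → ℝ) (j k : ι) : ℝ :=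
  ∑ i, X z i * Θ z i j k

/-- The open set `M = {x¹ > 0, x² > 0} ⊆ ℝ⁴`. -/
def M4 : Set (Fin 4 → ℝ) := {z | 0 < z 0 ∧ 0 < z 1}

/-- Components of `θ = dx¹∧dx² + dx¹∧dx³ + x¹x² dx³∧dx⁴`. -/
def tht (z : Fin 4 → ℝ) (i j : Fin 4) : ℝ :=
  if i = 0 ∧ j = 1 then 1 else if i = 1 ∧ j = 0 then -1
  else if i = 0 ∧ j = 2 then 1 else if i = 2 ∧ j = 0 then -1
  else if i = 2 ∧ j = 3 then z 0 * z 1 else if i = 3 ∧ j = 2 then -(z 0 * z 1) else 0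

lemma fv0 : ((0:Fin 4):ℕ) = 0 := rfl
lemma fv1 : ((1:Fin 4):ℕ) = 1 := rfl
lemma fv2 : ((2:Fin 4):ℕ) = 2 := rfl
lemma fv3 : ((3:Fin 4):ℕ) = 3 := rfl

lemma pder_const (i : Fin 4) (c : ℝ) (z : Fin 4 → ℝ) : pder i (fun _ => c) z = 0 := by
  simp [pder]

lemma pder_coord (i j : Fin 4) (z : Fin 4 → ℝ) :
    pder i (fun w => w j) z = if j = i then 1 else 0 := by
  have : (fun w : Fin 4 → ℝ => w j) = (ContinuousLinearMap.proj j : (Fin 4 → ℝ) →L[ℝ] ℝ) := rfl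
  rw [pder, this, ContinuousLinearMap.fderiv]
  simp [Pi.single_apply]

lemma diff_coord (j : Fin 4) (z : Fin 4 → ℝ) :
    DifferentiableAt ℝ (fun w : Fin 4 → ℝ => w j) z :=
  ((ContinuousLinearMap.proj j : (Fin 4 → ℝ) →L[ℝ] ℝ)).differentiableAt

lemma pder_mul (i : Fin 4) {g h : (Fin 4 → ℝ) → ℝ} {z : Fin 4 → ℝ}
    (hg : DifferentiableAt ℝ g z) (hh : DifferentiableAt ℝ h z) :
    pder i (fun w => g w * h w) z = pder i g z * h z + g z * pder i h z := by
  rw [pder, fderiv_fun_mul hg hh]; simp [pder]; ring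

lemma pder_add (i : Fin 4) {g h : (Fin 4 → ℝ) → ℝ} {z : Fin 4 → ℝ}
    (hg : DifferentiableAt ℝ g z) (hh : DifferentiableAt ℝ h z) :
    pder i (fun w => g w + h w) z = pder i g z + pder i h z := by
  rw [pder, fderiv_fun_add hg hh]; simp [pder]

lemma pder_neg (i : Fin 4) {g : (Fin 4 → ℝ) → ℝ} {z : Fin 4 → ℝ} :
    pder i (fun w => -g w) z = - pder i g z := by
  rw [pder, fderiv_fun_neg]; simp [pder]

lemma pder_congr (i : Fin 4) {g h : (Fin 4 → ℝ) → ℝ} {z : Fin 4 → ℝ}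
    (he : g =ᶠ[nhds z] h) : pder i g z = pder i h z := by
  rw [pder, he.fderiv_eq]; rfl

lemma pder_mul01 (i : Fin 4) (z : Fin 4 → ℝ) :
    pder i (fun w => w 0 * w 1) z = if i = 0 then z 1 else if i = 1 then z 0 else 0 := by
  rw [pder_mul i (diff_coord 0 z) (diff_coord 1 z), pder_coord, pder_coord]
  fin_cases i <;> simp [Fin.ext_iff, fv2, fv3]

/-- coefficient vector `(z 1, z 0, 0, 0)`. -/
def ee (z : Fin 4 → ℝ) (i : Fin 4) : ℝ := if i = 0 then z 1 else if i = 1 then z 0 else 0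

def sg (a b : Fin 4) : ℝ := if a = 2 ∧ b = 3 then 1 else if a = 3 ∧ b = 2 then -1 else 0

lemma pder_tht (i j k : Fin 4) (z : Fin 4 → ℝ) :
    pder i (fun w => tht w j k) z = sg j k * ee z i := by
  fin_cases j <;> fin_cases k <;>
    simp only [tht, sg, Fin.ext_iff, fv0, fv1, fv2, fv3] <;>
    norm_num <;>
    first
      | rw [pder_const]
      | (rw [pder_mul01]; simp [ee])
      | (rw [show (fun w : Fin 4 → ℝ => -(w 0 * w 1)) = fun w => -((fun v : Fin 4 → ℝ => v 0 * v 1) w) from rfl,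
             pder_neg, pder_mul01]; simp [ee]; try ring)

lemma dTwo_tht (z : Fin 4 → ℝ) (i j k : Fin 4) :
    dTwo tht z i j k = sg j k * ee z i - sg i k * ee z j + sg i j * ee z k := by
  simp only [dTwo, pder_tht]

lemma intThree_eval (X : (Fin 4 → ℝ) → Fin 4 → ℝ) (z : Fin 4 → ℝ) (j k : Fin 4) :
    intThree X (dTwo tht) z j k =
      X z 0 * dTwo tht z 0 j k + X z 1 * dTwo tht z 1 j k +
      X z 2 * dTwo tht z 2 j k + X z 3 * dTwo tht z 3 j k := by
  simp [intThree, Fin.sum_univ_four]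

lemma sg0 (k : Fin 4) : sg 0 k = 0 := by simp [sg, Fin.ext_iff, fv2, fv3]
lemma sg1 (k : Fin 4) : sg 1 k = 0 := by simp [sg, Fin.ext_iff, fv2, fv3]

lemma key (X : (Fin 4 → ℝ) → Fin 4 → ℝ)
    (h : ∀ z ∈ M4, ∀ j k, intThree X (dTwo tht) z j k = 0)
    (z : Fin 4 → ℝ) (hz : z ∈ M4) :
    X z 2 = 0 ∧ X z 3 = 0 ∧ z 1 * X z 0 + z 0 * X z 1 = 0 := by
  obtain ⟨h0, h1⟩ := hz
  have e03 := h z ⟨h0, h1⟩ 0 3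
  have e02 := h z ⟨h0, h1⟩ 0 2
  have e23 := h z ⟨h0, h1⟩ 2 3
  rw [intThree_eval] at e03 e02 e23
  simp only [dTwo_tht, sg, ee, Fin.ext_iff, fv0, fv1, fv2, fv3] at e03 e02 e23
  norm_num at e03 e02 e23
  refine ⟨?_, ?_, ?_⟩
  · exact e03.resolve_right (by linarith)
  · exact e02.resolve_right (by linarith)
  · linear_combination e23

lemma isOpen_M4 : IsOpen M4 :=
  IsOpen.and (isOpen_lt continuous_const (continuous_apply 0))
    (isOpen_lt continuous_const (continuous_apply 1))

set_option linter.unnecessarySeqFocus false in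
lemma intTwo_eval (X : (Fin 4 → ℝ) → Fin 4 → ℝ) (z : Fin 4 → ℝ) :
    intTwo X tht z 0 = -X z 1 - X z 2 ∧
    intTwo X tht z 1 = X z 0 ∧
    intTwo X tht z 2 = X z 0 - z 0 * z 1 * X z 3 ∧
    intTwo X tht z 3 = z 0 * z 1 * X z 2 := by
  refine ⟨?_, ?_, ?_, ?_⟩ <;>
    (simp only [intTwo, Fin.sum_univ_four, tht, Fin.ext_iff, fv0, fv1, fv2, fv3] <;>
      norm_num <;> ring)

theorem no_nonzero_locally_hamiltonian_fields
    (X : (Fin 4 → ℝ) → Fin 4 → ℝ)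
    (hX : ∀ i, ContDiff ℝ (⊤ : ℕ∞) (fun z => X z i)) :
    -- i(X)dθ = 0 on M iff X = f·(x¹∂₁ - x²∂₂)
    ((∀ z ∈ M4, ∀ j k, intThree X (dTwo tht) z j k = 0) ↔
      ∃ f : (Fin 4 → ℝ) → ℝ, ∀ z ∈ M4, ∀ i,
        X z i = f z * (if i = 0 then z 0 else if i = 1 then -z 1 else 0)) ∧
    -- adding d(i(X)θ) = 0 forces X = 0 on M
    ((∀ z ∈ M4, ∀ j k, intThree X (dTwo tht) z j k = 0) →
      (∀ z ∈ M4, ∀ i j, dOne (intTwo X tht) z i j = 0) →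
      ∀ z ∈ M4, X z = 0) := by
  constructor
  · constructor
    · -- forward: extract f
      intro h
      refine ⟨fun z => X z 0 / z 0, fun z hz i => ?_⟩
      obtain ⟨hc, hd, hab⟩ := key X h z hz
      have h0 : z 0 ≠ 0 := ne_of_gt hz.1
      fin_cases i <;> simp [Fin.ext_iff, fv2, fv3]
      · rw [div_mul_cancel₀ _ h0]
      · field_simp
        linear_combination hab
      · exact hc
      · exact hd
    · -- backward
      rintro ⟨f, hf⟩ z hz j k
      have h2 : X z 2 = 0 := by have := hf z hz 2; simpa [Fin.ext_iff, fv2, fv3] using this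
      have h3 : X z 3 = 0 := by have := hf z hz 3; simpa [Fin.ext_iff, fv2, fv3] using this
      have h0 : X z 0 = f z * z 0 := by have := hf z hz 0; simpa using this
      have h1 : X z 1 = f z * (-z 1) := by have := hf z hz 1; simpa [Fin.ext_iff, fv0, fv1] using this
      rw [intThree_eval, dTwo_tht, dTwo_tht, dTwo_tht, dTwo_tht, h2, h3, h0, h1]
      simp only [sg0, sg1, ee, Fin.ext_iff, fv0, fv1, fv2, fv3]
      norm_num
      ring
  · -- part 2
    intro h1 h2 z hz
    have hM : M4 ∈ nhds z := isOpen_M4.mem_nhds hz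
    have hc : ∀ w ∈ M4, X w 2 = 0 := fun w hw => (key X h1 w hw).1
    have hd : ∀ w ∈ M4, X w 3 = 0 := fun w hw => (key X h1 w hw).2.1
    have hab : ∀ w ∈ M4, w 1 * X w 0 + w 0 * X w 1 = 0 := fun w hw => (key X h1 w hw).2.2
    have dX : ∀ i : Fin 4, ∀ w, DifferentiableAt ℝ (fun v => X v i) w := fun i w =>
      ((hX i).differentiable (by simp)).differentiableAt
    set a : Fin 4 → ℝ := fun i => pder i (fun w => X w 0) z with ha
    set b : Fin 4 → ℝ := fun i => pder i (fun w => X w 1) z with hb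
    -- pder of intTwo components
    have E1 : ∀ i, pder i (fun w => intTwo X tht w 1) z = a i := by
      intro i
      have : (fun w => intTwo X tht w 1) = fun w => X w 0 := by
        funext w; exact (intTwo_eval X w).2.1
      rw [this]
    have E0 : ∀ i, pder i (fun w => intTwo X tht w 0) z = -(b i) := by
      intro i
      have he : (fun w => intTwo X tht w 0) =ᶠ[nhds z] (fun w => -X w 1) :=
        Filter.eventuallyEq_of_mem hM (fun w hw => by
          rw [(intTwo_eval X w).1, hc w hw]; ring)
      rw [pder_congr i he, pder_neg]
    have E2 : ∀ i, pder i (fun w => intTwo X tht w 2) z = a i := by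
      intro i
      have he : (fun w => intTwo X tht w 2) =ᶠ[nhds z] (fun w => X w 0) :=
        Filter.eventuallyEq_of_mem hM (fun w hw => by
          rw [(intTwo_eval X w).2.2.1, hd w hw]; ring)
      rw [pder_congr i he]
    have eq3 : a 0 + b 1 = 0 := by
      have := h2 z hz 0 1
      rw [dOne, E1 0, E0 1] at this
      linarith
    have eq4 : a 0 + b 2 = 0 := by
      have := h2 z hz 0 2
      rw [dOne, E2 0, E0 2] at this
      linarith
    have eq5 : a 1 - a 2 = 0 := by
      have := h2 z hz 1 2
      rw [dOne, E2 1, E1 2] at this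
      linarith
    -- derivatives of the relation z1*X0 + z0*X1 = 0
    have pg : ∀ i : Fin 4, pder i (fun w => w 1 * X w 0 + w 0 * X w 1) z
        = (if (1:Fin 4) = i then 1 else 0) * X z 0 + z 1 * a i
          + (if (0:Fin 4) = i then 1 else 0) * X z 1 + z 0 * b i := by
      intro i
      rw [pder_add i (((diff_coord 1 z)).fun_mul (dX 0 z)) (((diff_coord 0 z)).fun_mul (dX 1 z)),
        pder_mul i (diff_coord 1 z) (dX 0 z), pder_mul i (diff_coord 0 z) (dX 1 z),
        pder_coord, pder_coord]
      ring
    have pg0 : ∀ i : Fin 4, pder i (fun w => w 1 * X w 0 + w 0 * X w 1) z = 0 := by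
      intro i
      have he : (fun w => w 1 * X w 0 + w 0 * X w 1) =ᶠ[nhds z] (fun _ => (0:ℝ)) :=
        Filter.eventuallyEq_of_mem hM (fun w hw => hab w hw)
      rw [pder_congr i he, pder_const]
    have eq1 : X z 0 + z 1 * a 1 + z 0 * b 1 = 0 := by
      have := (pg 1).symm.trans (pg0 1)
      norm_num at this
      linarith
    have eq2 : z 1 * a 2 + z 0 * b 2 = 0 := by
      have := (pg 2).symm.trans (pg0 2)
      simp [Fin.ext_iff, fv2] at this
      linarith
    have hX0 : X z 0 = 0 := by
      linear_combination eq1 - eq2 - z 0 * eq3 + z 0 * eq4 - z 1 * eq5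
    have hX1 : X z 1 = 0 := by
      have := hab z hz
      rw [hX0] at this
      have h0 : z 0 ≠ 0 := ne_of_gt hz.1
      simp only [mul_zero, zero_add] at this
      exact (mul_eq_zero.mp this).resolve_left h0
    funext i
    fin_cases i
    · exact hX0
    · exact hX1
    · exact hc z hz
    · exact hd z hz
end
end

section
/- Let G be a Lie group with left-invariant pseudo-Riemannian metric γ, (Y_i) a basis of left-invariant vector fields with dual left-invariant 1-forms (ω^i), and on M = G×G set ω = γ_{ij} π₁*ω^i ∧ π₂*ω^j where γ_{ij} = γ(Y_i,Y_j) are constants. Then dω = 0 if and only if G is abelian (i.e. all structure constants c^i_{jk} vanish). -/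
/-!
At the Lie-algebra level (left-invariant objects): `γ` is a nondegenerate symmetric
bilinear form on `𝔤`, the 2-form `ω` on `𝔤 × 𝔤` is `ω(A,B) = γ(A₁,B₂) - γ(B₁,A₂)`,
and the exterior differential of the left-invariant 2-form `ω` is the
Chevalley–Eilenberg differential
`dω(U,V,W) = -ω([U,V],W) + ω([U,W],V) - ω([V,W],U)`
(with the componentwise bracket on `𝔤 × 𝔤`), since the coefficients `γ_{ij}` are
constant.  Abelian means all structure constants vanish, i.e. the bracket is zero.

Proof idea: every term of `dω` contains a bracket, so `dω = 0` for abelian `𝔤`.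
Conversely, evaluating on `U = (u, 0)`, `V = (v, 0)`, `W = (0, w)` kills all terms but one
and gives `dω(U,V,W) = -γ([u,v], w)`; nondegeneracy of `γ` then forces `[u,v] = 0`.
-/

/-- The left-invariant 2-form `ω = γ_{ij} π₁*ω^i ∧ π₂*ω^j` on `G × G`, evaluated on
left-invariant vector fields. -/
def wGG {g : Type*} [LieRing g] [LieAlgebra ℝ g]
    (γ : g →ₗ[ℝ] g →ₗ[ℝ] ℝ) (A B : g × g) : ℝ :=
  γ A.1 B.2 - γ B.1 A.2

/-- The exterior (Chevalley–Eilenberg) differential of `ω` on left-invariant fields. -/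
def dwGG {g : Type*} [LieRing g] [LieAlgebra ℝ g]
    (γ : g →ₗ[ℝ] g →ₗ[ℝ] ℝ) (U V W : g × g) : ℝ :=
  - wGG γ (⁅U.1, V.1⁆, ⁅U.2, V.2⁆) W
  + wGG γ (⁅U.1, W.1⁆, ⁅U.2, W.2⁆) V
  - wGG γ (⁅V.1, W.1⁆, ⁅V.2, W.2⁆) U

section

variable {g : Type*} [LieRing g] [LieAlgebra ℝ g] (γ : g →ₗ[ℝ] g →ₗ[ℝ] ℝ)

theorem dwGG_eq_zero_of_bracket_eq_zero (h : ∀ u v : g, ⁅u, v⁆ = (0 : g)) (U V W : g × g) :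
    dwGG γ U V W = 0 := by
  simp [dwGG, wGG, h]

theorem dwGG_fst_fst_snd (u v w : g) :
    dwGG γ (u, 0) (v, 0) (0, w) = -γ ⁅u, v⁆ w := by
  simp [dwGG, wGG]

end

theorem dOmega_zero_iff_abelian_general {g : Type*} [LieRing g] [LieAlgebra ℝ g]
    (γ : g →ₗ[ℝ] g →ₗ[ℝ] ℝ)
    (hnd : ∀ a : g, (∀ b : g, γ a b = 0) → a = 0) :
    (∀ U V W : g × g, dwGG γ U V W = 0) ↔ (∀ u v : g, ⁅u, v⁆ = (0 : g)) := by
  refine ⟨fun h u v => hnd _ fun w => ?_, dwGG_eq_zero_of_bracket_eq_zero γ⟩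
  simpa [dwGG_fst_fst_snd] using h (u, 0) (v, 0) (0, w)

theorem dOmega_zero_iff_abelian {g : Type*} [LieRing g] [LieAlgebra ℝ g]
    (γ : g →ₗ[ℝ] g →ₗ[ℝ] ℝ)
    (hsym : ∀ a b : g, γ a b = γ b a)
    (hnd : ∀ a : g, (∀ b : g, γ a b = 0) → a = 0) :
    (∀ U V W : g × g, dwGG γ U V W = 0) ↔ (∀ u v : g, ⁅u, v⁆ = (0 : g)) :=
  dOmega_zero_iff_abelian_general γ hnd
end

section
/- With M = G×G, ω = γ_{ij} π₁*ω^i ∧ π₂*ω^j as above, let X = ξ^i Y_i (ξ^i constants) be a left-invariant vector field on G and Z = X₁ + X₂ the vector field on M given by the two lifts of X. Then d(i(Z)ω) = 0 if and only if γ_{ij} ξ^i c^j_{hk} = 0 for all h,k, i.e. if and only if X is γ-orthogonal to the derived algebra [g,g]. -/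
/-- The Chevalley–Eilenberg differential of the left-invariant 1-form `i(Z)ω`,
`Z = (X,X)`, evaluated on `U, V`. -/
def diZw {g : Type*} [LieRing g] [LieAlgebra ℝ g]
    (γ : g →ₗ[ℝ] g →ₗ[ℝ] ℝ) (X : g) (U V : g × g) : ℝ :=
  - wGG γ (X, X) (⁅U.1, V.1⁆, ⁅U.2, V.2⁆)

theorem diZw_apply {g : Type*} [LieRing g] [LieAlgebra ℝ g]
    (γ : g →ₗ[ℝ] g →ₗ[ℝ] ℝ) (X : g) (U V : g × g) :
    diZw γ X U V = γ ⁅U.1, V.1⁆ X - γ X ⁅U.2, V.2⁆ := by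
  rw [diZw, wGG, neg_sub]

theorem diZw_inr {g : Type*} [LieRing g] [LieAlgebra ℝ g]
    (γ : g →ₗ[ℝ] g →ₗ[ℝ] ℝ) (X u v : g) :
    diZw γ X (0, u) (0, v) = -γ X ⁅u, v⁆ := by
  rw [diZw_apply, zero_lie, map_zero, LinearMap.zero_apply, zero_sub]

theorem diZomega_zero_iff_orthogonal_derived {g : Type*} [LieRing g] [LieAlgebra ℝ g]
    (γ : g →ₗ[ℝ] g →ₗ[ℝ] ℝ)
    (hsym : ∀ a b : g, γ a b = γ b a)
    (X : g) :
    (∀ U V : g × g, diZw γ X U V = 0) ↔ (∀ u v : g, γ X ⁅u, v⁆ = 0) := by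
  refine ⟨fun h u v => ?_, fun h U V => ?_⟩
  · simpa [diZw_inr] using h (0, u) (0, v)
  · rw [diZw_apply, hsym, h, h, sub_zero]
end

section
/- With M = G×G and ω as above, Z = X₁ + X₂ for left-invariant X ∈ g, the condition i(Z)dω = 0 is equivalent to γ(ad X(U), V) + γ(U, ad X(V)) = 0 for all U,V ∈ g, i.e. to L_Xγ = 0 where X, γ are regarded as left-invariant tensor fields on G. -/
/-!
Expanding `dω((X, X), V, W)` bilinearly, the terms containing `ad X` regroup into the
`ad X`-skewness defect `γ(ad X u, v) + γ(u, ad X v)` evaluated at the mixed pairs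
`(W₁, V₂)` and `(V₁, W₂)`, while the remaining term pairs `X` with brackets and vanishes because
`X` is `γ`-orthogonal to `[𝔤, 𝔤]`. Choosing `V = (0, v)`, `W = (u, 0)` isolates one defect.
-/

section

variable {g : Type*} [LieRing g] [LieAlgebra ℝ g] (γ : g →ₗ[ℝ] g →ₗ[ℝ] ℝ)

theorem dwGG_diag_eq (X : g) (V W : g × g) :
    dwGG γ (X, X) V W =
      (γ ⁅X, W.1⁆ V.2 + γ W.1 ⁅X, V.2⁆) - (γ ⁅X, V.1⁆ W.2 + γ V.1 ⁅X, W.2⁆)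
        - wGG γ (⁅V.1, W.1⁆, ⁅V.2, W.2⁆) (X, X) := by
  simp only [dwGG, wGG]
  ring

theorem wGG_bracket_diag_eq_zero (hsym : ∀ a b : g, γ a b = γ b a) {X : g}
    (horth : ∀ u v : g, γ X ⁅u, v⁆ = 0) (a b c d : g) :
    wGG γ (⁅a, b⁆, ⁅c, d⁆) (X, X) = 0 := by
  simp only [wGG, hsym ⁅a, b⁆, horth, sub_self]

end

theorem iZdOmega_zero_iff_ad_skew {g : Type*} [LieRing g] [LieAlgebra ℝ g]
    (γ : g →ₗ[ℝ] g →ₗ[ℝ] ℝ)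
    (hsym : ∀ a b : g, γ a b = γ b a)
    (X : g)
    -- first locally-Hamiltonian condition: X ⊥_γ [𝔤,𝔤]
    (horth : ∀ u v : g, γ X ⁅u, v⁆ = 0) :
    (∀ V W : g × g, dwGG γ (X, X) V W = 0) ↔
      (∀ u v : g, γ ⁅X, u⁆ v + γ u ⁅X, v⁆ = 0) := by
  simp only [dwGG_diag_eq, wGG_bracket_diag_eq_zero γ hsym horth, sub_zero]
  constructor
  · intro h u v
    simpa using h (0, v) (u, 0)
  · intro h V W
    rw [h, h, sub_self]
end
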